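/- Let J and J' be saturated strongly stable ideals in S = K[x_1,...,x_n] such that J̄ = J ∩ K[x_1,...,x_{n-1}] and J̄' = J' ∩ K[x_1,...,x_{n-1}] are both lex ideals. If J and J' have the same Hilbert polynomial, then J̄_d = J̄'_d for all sufficiently large d. -/

import Mathlib

open MvPolynomial

def mdeg {n : ℕ} (m : Fin n →₀ ℕ) : ℕ := ∑ i, m i

def IsMonomialIdeal {n : ℕ} {K : Type} [Field K] (J : Ideal (MvPolynomial (Fin n) K)) : Prop :=
  ∀ f ∈ J, ∀ m ∈ f.support, (monomial m (1 : K) : MvPolynomial (Fin n) K) ∈ J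

def StronglyStable {n : ℕ} {K : Type} [Field K] (J : Ideal (MvPolynomial (Fin n) K)) : Prop :=
  IsMonomialIdeal J ∧
  ∀ m : Fin n →₀ ℕ, (monomial m (1 : K) : MvPolynomial (Fin n) K) ∈ J →
    ∀ j i : Fin n, i < j → m j ≠ 0 →
      (monomial (m - Finsupp.single j 1 + Finsupp.single i 1) (1 : K) : MvPolynomial (Fin n) K) ∈ J

def Saturated {n : ℕ} {K : Type} [Field K] (J : Ideal (MvPolynomial (Fin n) K)) : Prop :=
  ∀ f : MvPolynomial (Fin n) K, (∃ k : ℕ, ∀ i : Fin n, (X i) ^ k * f ∈ J) → f ∈ J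

def LexLt {n : ℕ} (u v : Fin n →₀ ℕ) : Prop :=
  ∃ i : Fin n, (∀ j : Fin n, j < i → u j = v j) ∧ u i < v i

/-- `J̄ = J ∩ K[x_1,…,x_n]` is a lex ideal in `K[x_1,…,x_n]`: among monomials of `J` not
involving the last variable, the set is closed under passing to lex-larger monomials of the
same degree (again not involving the last variable). -/
def BarLex {n : ℕ} {K : Type} [Field K] (J : Ideal (MvPolynomial (Fin (n + 1)) K)) : Prop :=
  ∀ u v : Fin (n + 1) →₀ ℕ, u (Fin.last n) = 0 → v (Fin.last n) = 0 →
    (monomial u (1 : K) : MvPolynomial (Fin (n + 1)) K) ∈ J →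
    mdeg v = mdeg u → LexLt u v →
    (monomial v (1 : K) : MvPolynomial (Fin (n + 1)) K) ∈ J

noncomputable def gradedPiece {n : ℕ} {K : Type} [Field K] (I : Ideal (MvPolynomial (Fin n) K))
    (d : ℕ) : Submodule K (MvPolynomial (Fin n) K) :=
  (Submodule.restrictScalars K I) ⊓ homogeneousSubmodule (Fin n) K d

def IsHilbPoly {n : ℕ} {K : Type} [Field K] (I : Ideal (MvPolynomial (Fin n) K))
    (p : Polynomial ℚ) : Prop :=
  ∃ N : ℕ, ∀ d ≥ N, p.eval (d : ℚ) = (Module.finrank K (gradedPiece I d) : ℚ)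

/-!
Saturation and strong stability make multiplication by `x_n` injective on the monomials of `J`,
so the monomials of `J_{d+1}` are those of `J̄_{d+1}` together with `x_n` times those of `J_d`.
Hence `dim J̄_{d+1} = p(d+1) - p(d)` for `d ≫ 0`, where `p` is the common Hilbert polynomial, and
`J̄_{d+1}`, `J̄'_{d+1}` have the same size. Being lex segments of the monomials of that degree in
`x_1, …, x_{n-1}`, they coincide.
-/

lemma mdeg_eq_degree {k : ℕ} (m : Fin k →₀ ℕ) : mdeg m = m.degree :=
  (Finsupp.degree_eq_sum m).symm

lemma lexLt_iff_toLex_lt {k : ℕ} {u v : Fin k →₀ ℕ} : LexLt u v ↔ toLex u < toLex v :=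
  Iff.rfl

section MonomialsOfDegree

variable {σ K : Type*} [Field K]

lemma X_mul_monomial_one (i : σ) (m : σ →₀ ℕ) :
    X i * monomial m (1 : K) = monomial (m + Finsupp.single i 1) 1 := by
  rw [monomial_add_single, pow_one, mul_comm]

def monomialsOfDegree (I : Ideal (MvPolynomial σ K)) (d : ℕ) : Set (σ →₀ ℕ) :=
  {m | m.degree = d} ∩ {m | monomial m (1 : K) ∈ I}

lemma monomialsOfDegree_finite [Finite σ] (I : Ideal (MvPolynomial σ K)) (d : ℕ) :
    (monomialsOfDegree I d).Finite :=
  (Finsupp.finite_of_degree_eq d).subset Set.inter_subset_left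

end MonomialsOfDegree

section GradedPiece

variable {n : ℕ} {K : Type} [Field K] {I : Ideal (MvPolynomial (Fin n) K)}

lemma IsMonomialIdeal.restrictScalars_eq (hI : IsMonomialIdeal I) :
    I.restrictScalars K = restrictSupport K {m | monomial m (1 : K) ∈ I} := by
  refine le_antisymm (fun f hf m hm => hI f hf m hm) ?_
  rw [restrictSupport_eq_span, Submodule.span_le]
  rintro _ ⟨m, hm, rfl⟩
  exact hm

lemma IsMonomialIdeal.gradedPiece_eq (hI : IsMonomialIdeal I) (d : ℕ) :
    gradedPiece I d = restrictSupport K (monomialsOfDegree I d) := by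
  ext f
  rw [gradedPiece, hI.restrictScalars_eq, homogeneousSubmodule_eq_finsupp_supported,
    Submodule.mem_inf]
  exact and_comm.trans Set.subset_inter_iff.symm

lemma IsMonomialIdeal.finrank_gradedPiece (hI : IsMonomialIdeal I) (d : ℕ) :
    Module.finrank K (gradedPiece I d) = (monomialsOfDegree I d).ncard := by
  rw [hI.gradedPiece_eq,
    Module.finrank_eq_nat_card_basis (basisRestrictSupport K (monomialsOfDegree I d)),
    Nat.card_coe_set_eq]

end GradedPiece

section LastVariable

variable {n : ℕ} {K : Type} [Field K] {J J' : Ideal (MvPolynomial (Fin (n + 1)) K)}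

/-- The monomials spanning `J̄_d`. -/
def lastFreeMonomialsOfDegree (J : Ideal (MvPolynomial (Fin (n + 1)) K)) (d : ℕ) :
    Set (Fin (n + 1) →₀ ℕ) :=
  {m ∈ monomialsOfDegree J d | m (Fin.last n) = 0}

lemma lastFreeMonomialsOfDegree_finite (J : Ideal (MvPolynomial (Fin (n + 1)) K)) (d : ℕ) :
    (lastFreeMonomialsOfDegree J d).Finite :=
  (monomialsOfDegree_finite J d).subset (Set.sep_subset _ _)

/-- If `x_n u ∈ J`, strong stability puts every `x_i u` in `J`, so `u ∈ J` by saturation. -/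
lemma StronglyStable.monomial_add_single_last_mem_iff (hJ : StronglyStable J)
    (hJs : Saturated J) (m : Fin (n + 1) →₀ ℕ) :
    monomial (m + Finsupp.single (Fin.last n) 1) (1 : K) ∈ J ↔ monomial m (1 : K) ∈ J := by
  refine ⟨fun h => hJs _ ⟨1, fun i => ?_⟩, fun h => ?_⟩
  · rw [pow_one, X_mul_monomial_one]
    rcases (Fin.le_last i).lt_or_eq with hi | rfl
    · simpa using hJ.2 _ h (Fin.last n) i hi (by simp)
    · exact h
  · rw [← X_mul_monomial_one]
    exact J.mul_mem_left _ h

lemma monomialsOfDegree_succ_eq_union (hJ : StronglyStable J) (hJs : Saturated J) (d : ℕ) :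
    monomialsOfDegree J (d + 1) = lastFreeMonomialsOfDegree J (d + 1) ∪
      (· + Finsupp.single (Fin.last n) 1) '' monomialsOfDegree J d := by
  ext m
  constructor
  · intro hm
    rcases Nat.eq_zero_or_pos (m (Fin.last n)) with h0 | h0
    · exact Or.inl ⟨hm, h0⟩
    · have hm' : m - Finsupp.single (Fin.last n) 1 + Finsupp.single (Fin.last n) 1 = m :=
        tsub_add_cancel_of_le (Finsupp.single_le_iff.mpr h0)
      refine Or.inr ⟨m - Finsupp.single (Fin.last n) 1, ⟨?_, ?_⟩, hm'⟩
      · have hdeg := congrArg Finsupp.degree hm'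
        rw [map_add, Finsupp.degree_single, (hm.1 : m.degree = d + 1)] at hdeg
        exact Nat.add_right_cancel hdeg
      · show monomial _ (1 : K) ∈ J
        rw [← hJ.monomial_add_single_last_mem_iff hJs, hm']
        exact hm.2
  · rintro (hm | ⟨m, ⟨hd, hm⟩, rfl⟩)
    · exact hm.1
    · exact ⟨by simp_all, (hJ.monomial_add_single_last_mem_iff hJs m).mpr hm⟩

lemma ncard_monomialsOfDegree_succ (hJ : StronglyStable J) (hJs : Saturated J) (d : ℕ) :
    (monomialsOfDegree J (d + 1)).ncard =
      (lastFreeMonomialsOfDegree J (d + 1)).ncard + (monomialsOfDegree J d).ncard := by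
  have hdisj : Disjoint (lastFreeMonomialsOfDegree J (d + 1))
      ((· + Finsupp.single (Fin.last n) 1) '' monomialsOfDegree J d) := by
    rw [Set.disjoint_left]
    rintro _ ⟨_, h0⟩ ⟨m, _, rfl⟩
    simp at h0
  rw [monomialsOfDegree_succ_eq_union hJ hJs, Set.ncard_union_eq hdisj
    (lastFreeMonomialsOfDegree_finite J _)
    ((monomialsOfDegree_finite J d).image _),
    Set.ncard_image_of_injective _ (add_left_injective _)]

lemma ncard_lastFreeMonomialsOfDegree_eq_eval_sub (hJ : StronglyStable J) (hJs : Saturated J)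
    {p : Polynomial ℚ} (hp : IsHilbPoly J p) :
    ∃ N, ∀ d ≥ N, ((lastFreeMonomialsOfDegree J (d + 1)).ncard : ℚ) =
      p.eval ((d : ℚ) + 1) - p.eval (d : ℚ) := by
  obtain ⟨N, hN⟩ := hp
  refine ⟨N, fun d hd => ?_⟩
  have hd1 := hN (d + 1) (by omega)
  rw [hJ.1.finrank_gradedPiece, ncard_monomialsOfDegree_succ hJ hJs] at hd1
  rw [hN d hd, hJ.1.finrank_gradedPiece, ← Nat.cast_succ, hd1]
  push_cast
  ring

/-- A monomial of `J̄_d` outside `J̄'_d` is lex-smaller than every monomial of `J̄'_d`, which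
therefore all lie in `J̄_d` as well. -/
lemma BarLex.lastFreeMonomialsOfDegree_subset (hbar : BarLex J) (hbar' : BarLex J') {d : ℕ}
    (hcard : (lastFreeMonomialsOfDegree J d).ncard ≤ (lastFreeMonomialsOfDegree J' d).ncard) :
    lastFreeMonomialsOfDegree J d ⊆ lastFreeMonomialsOfDegree J' d := by
  intro m hm
  by_contra hm'
  have hsub : lastFreeMonomialsOfDegree J' d ⊆ lastFreeMonomialsOfDegree J d \ {m} := by
    intro v hv
    have hvm : v ≠ m := fun h => hm' (h ▸ hv)
    have hdeg : mdeg m = mdeg v := by rw [mdeg_eq_degree, mdeg_eq_degree, hm.1.1, hv.1.1]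
    rcases lt_or_gt_of_ne (toLex.injective.ne hvm) with hlt | hgt
    · have := hbar' v m hv.2 hm.2 hv.1.2 hdeg (lexLt_iff_toLex_lt.mpr hlt)
      exact absurd ⟨⟨hm.1.1, this⟩, hm.2⟩ hm'
    · have := hbar m v hm.2 hv.2 hm.1.2 hdeg.symm (lexLt_iff_toLex_lt.mpr hgt)
      exact ⟨⟨⟨hv.1.1, this⟩, hv.2⟩, hvm⟩
  have hfin := lastFreeMonomialsOfDegree_finite J d
  have := Set.ncard_le_ncard hsub hfin.sdiff
  have := Set.ncard_sdiff_singleton_lt_of_mem hm hfin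
  omega

lemma BarLex.lastFreeMonomialsOfDegree_eq (hbar : BarLex J) (hbar' : BarLex J') {d : ℕ}
    (hcard : (lastFreeMonomialsOfDegree J d).ncard = (lastFreeMonomialsOfDegree J' d).ncard) :
    lastFreeMonomialsOfDegree J d = lastFreeMonomialsOfDegree J' d :=
  (hbar.lastFreeMonomialsOfDegree_subset hbar' hcard.le).antisymm
    (hbar'.lastFreeMonomialsOfDegree_subset hbar hcard.ge)

end LastVariable

/-- If `J` and `J'` are saturated strongly stable ideals whose restrictions `J̄`, `J̄'` to the
first `n` variables are lex, and `J`, `J'` have the same Hilbert polynomial, then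
`J̄_d = J̄'_d` for all sufficiently large `d`. -/
theorem stmt_8 {n : ℕ} {K : Type} [Field K]
    (J J' : Ideal (MvPolynomial (Fin (n + 1)) K))
    (hJ : StronglyStable J) (hJ' : StronglyStable J')
    (hJs : Saturated J) (hJ's : Saturated J')
    (hbar : BarLex J) (hbar' : BarLex J')
    (hp : ∃ p : Polynomial ℚ, IsHilbPoly J p ∧ IsHilbPoly J' p) :
    ∃ N : ℕ, ∀ d ≥ N, ∀ m : Fin (n + 1) →₀ ℕ, mdeg m = d → m (Fin.last n) = 0 →
      ((monomial m (1 : K) : MvPolynomial (Fin (n + 1)) K) ∈ J ↔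
        (monomial m (1 : K) : MvPolynomial (Fin (n + 1)) K) ∈ J') := by
  obtain ⟨p, hpJ, hpJ'⟩ := hp
  obtain ⟨N, hN⟩ := ncard_lastFreeMonomialsOfDegree_eq_eval_sub hJ hJs hpJ
  obtain ⟨N', hN'⟩ := ncard_lastFreeMonomialsOfDegree_eq_eval_sub hJ' hJ's hpJ'
  refine ⟨max N N' + 1, fun d hd m hmd hml => ?_⟩
  obtain ⟨e, rfl⟩ : ∃ e, d = e + 1 := ⟨d - 1, by omega⟩
  have hcard : (lastFreeMonomialsOfDegree J (e + 1)).ncard =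
      (lastFreeMonomialsOfDegree J' (e + 1)).ncard := by
    exact_mod_cast (hN e (by omega)).trans (hN' e (by omega)).symm
  have hmem := Set.ext_iff.mp (hbar.lastFreeMonomialsOfDegree_eq hbar' hcard) m
  rw [mdeg_eq_degree] at hmd
  simpa [lastFreeMonomialsOfDegree, monomialsOfDegree, hmd, hml] using hmem
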